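/- A finite simple graph G has an odd factor (a spanning subgraph in which every vertex has odd degree) if and only if every connected component of G has an even number of vertices. -/
import Mathlib

open Finset

attribute [local instance 50] Classical.propDecidable

private lemma odd_iff_cast (n : ℕ) : Odd n ↔ (n : ZMod 2) = 1 := by
  rw [Nat.odd_iff, ← ZMod.natCast_mod n 2]
  rcases Nat.mod_two_eq_zero_or_one n with h | h <;> simp [h] <;> decide

private lemma even_iff_cast (n : ℕ) : Even n ↔ (n : ZMod 2) = 0 := by
  rw [Nat.even_iff, ← ZMod.natCast_mod n 2]
  rcases Nat.mod_two_eq_zero_or_one n with h | h <;> simp [h] <;> decide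

variable {V : Type} [Fintype V] [DecidableEq V] (G : SimpleGraph V) [DecidableRel G.Adj]

/-- boundary map -/
private def bd (x : Sym2 V → ZMod 2) (v : V) : ZMod 2 :=
  ∑ e ∈ G.edgeFinset, if v ∈ e then x e else 0

private lemma bd_add (x y : Sym2 V → ZMod 2) (v : V) :
    bd G (x + y) v = bd G x v + bd G y v := by
  simp only [bd, Pi.add_apply]
  rw [← Finset.sum_add_distrib]
  apply Finset.sum_congr rfl
  intro e _
  split <;> simp

private lemma bd_single {a b : V} (hab : G.Adj a b) (v : V) :
    bd G (fun e => if e = s(a, b) then 1 else 0) v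
      = (if v = a then 1 else 0) + (if v = b then 1 else 0) := by
  have hmem : s(a, b) ∈ G.edgeFinset := by
    rw [SimpleGraph.mem_edgeFinset]; exact hab
  rw [bd, Finset.sum_eq_single_of_mem (s(a,b)) hmem]
  · have hne := hab.ne
    by_cases h1 : v = a <;> by_cases h2 : v = b <;>
      simp [h1, h2, Sym2.mem_iff] at * <;> simp_all
  · intro e _ hne
    simp [hne]

private lemma bd_walk {u v : V} (p : G.Walk u v) :
    ∃ x : Sym2 V → ZMod 2,
      ∀ w, bd G x w = (if w = u then 1 else 0) + (if w = v then 1 else 0) := by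
  induction p with
  | nil =>
    refine ⟨0, fun w => ?_⟩
    have h0 : bd G 0 w = 0 := by simp [bd]
    rw [h0]
    split <;> decide
  | @cons a b c hab p ih =>
    obtain ⟨x, hx⟩ := ih
    refine ⟨(fun e => if e = s(a, b) then 1 else 0) + x, fun w => ?_⟩
    rw [bd_add, hx, bd_single G hab]
    by_cases h1 : w = a <;> by_cases h2 : w = b <;> by_cases h3 : w = c <;>
      simp [h1, h2, h3] <;> (try intro _) <;> ring_nf <;> simp [show (2:ZMod 2) = 0 from rfl]

private lemma tjoin (T : Finset V)
    (hT : ∀ c : G.ConnectedComponent,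
      Even ((T.filter (fun v => G.connectedComponentMk v = c)).card)) :
    ∃ x : Sym2 V → ZMod 2, ∀ w, bd G x w = if w ∈ T then 1 else 0 := by
  induction T using Finset.strongInduction with
  | _ T ih =>
    rcases T.eq_empty_or_nonempty with rfl | ⟨u, hu⟩
    · exact ⟨0, fun w => by simp [bd]⟩
    · -- find v ≠ u in T in the same component
      set c := G.connectedComponentMk u with hc
      have hcard := hT c
      have huf : u ∈ T.filter (fun v => G.connectedComponentMk v = c) := by
        rw [Finset.mem_filter]; exact ⟨hu, hc.symm⟩
      obtain ⟨v, hv, hvu⟩ : ∃ v ∈ T.filter (fun v => G.connectedComponentMk v = c), v ≠ u := by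
        by_contra h
        push_neg at h
        have : T.filter (fun v => G.connectedComponentMk v = c) = {u} := by
          apply Finset.eq_singleton_iff_unique_mem.mpr ⟨huf, h⟩
        rw [this] at hcard
        simp at hcard
      simp only [Finset.mem_filter] at hv
      obtain ⟨hvT, hvc⟩ := hv
      have hreach : G.Reachable v u := SimpleGraph.ConnectedComponent.exact hvc
      obtain ⟨x1, hx1⟩ := bd_walk G hreach.some
      set T' := (T.erase u).erase v with hT'
      have hsub : T' ⊂ T := by
        apply Finset.ssubset_of_subset_of_ssubset
        · exact Finset.erase_subset _ _
        · exact Finset.erase_ssubset hu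
      have hT'T : T' ⊆ T := hsub.subset
      have hT'ev : ∀ d : G.ConnectedComponent,
          Even ((T'.filter (fun w => G.connectedComponentMk w = d)).card) := by
        intro d
        by_cases hd : d = c
        · subst hd
          have : T.filter (fun w => G.connectedComponentMk w = c)
              = insert u (insert v (T'.filter (fun w => G.connectedComponentMk w = c))) := by
            ext w
            simp only [Finset.mem_filter, Finset.mem_insert, hT', Finset.mem_erase]
            constructor
            · rintro ⟨hw, hwc⟩
              by_cases h1 : w = u
              · exact Or.inl h1
              · by_cases h2 : w = v
                · exact Or.inr (Or.inl h2)
                · exact Or.inr (Or.inr ⟨⟨h2, h1, hw⟩, hwc⟩)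
            · rintro (rfl | rfl | ⟨⟨_, _, hw⟩, hwc⟩)
              · exact ⟨hu, rfl⟩
              · exact ⟨hvT, hvc⟩
              · exact ⟨hw, hwc⟩
          rw [this] at hcard
          have hu1 : u ∉ insert v ((T'.filter (fun w => G.connectedComponentMk w = c))) := by
            simp only [Finset.mem_insert, Finset.mem_filter, hT', Finset.mem_erase]
            rintro (h | ⟨⟨_, h, _⟩, _⟩)
            · exact hvu h.symm
            · exact h rfl
          have hv1 : v ∉ (T'.filter (fun w => G.connectedComponentMk w = c)) := by
            simp [hT', Finset.mem_filter]
          rw [Finset.card_insert_of_notMem hu1, Finset.card_insert_of_notMem hv1] at hcard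
          rcases hcard with ⟨k, hk⟩
          exact ⟨k - 1, by omega⟩
        · have : T'.filter (fun w => G.connectedComponentMk w = d)
              = T.filter (fun w => G.connectedComponentMk w = d) := by
            ext w
            simp only [Finset.mem_filter, hT', Finset.mem_erase]
            constructor
            · rintro ⟨⟨_, _, hw⟩, hwd⟩; exact ⟨hw, hwd⟩
            · rintro ⟨hw, hwd⟩
              refine ⟨⟨?_, ?_, hw⟩, hwd⟩
              · rintro rfl; exact hd (hwd.symm.trans hvc)
              · rintro rfl; exact hd (hwd.symm.trans hc.symm)
          rw [this]
          exact hT d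
      obtain ⟨x2, hx2⟩ := ih T' hsub hT'ev
      refine ⟨x1 + x2, fun w => ?_⟩
      rw [bd_add, hx1, hx2]
      have huv : u ≠ v := fun h => hvu h.symm
      have huT' : u ∉ T' := by simp [hT']
      have hvT' : v ∉ T' := by simp [hT', hvu]
      have hwT' : w ∈ T' ↔ w ≠ v ∧ w ≠ u ∧ w ∈ T := by
        simp [hT', Finset.mem_erase]
      by_cases h1 : w = u <;> by_cases h2 : w = v
      · exact absurd (h1.symm.trans h2) (fun h => hvu h.symm)
      · have hwT : w ∈ T := by rw [h1]; exact hu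
        have hw' : w ∉ T' := fun h => (hwT'.mp h).2.1 h1
        rw [if_neg h2, if_pos h1, if_neg hw', if_pos hwT]
        norm_num
      · have hwT : w ∈ T := by rw [h2]; exact hvT
        have hw' : w ∉ T' := fun h => (hwT'.mp h).1 h2
        rw [if_pos h2, if_neg h1, if_neg hw', if_pos hwT]
        norm_num
      · by_cases h3 : w ∈ T
        · have hw' : w ∈ T' := hwT'.mpr ⟨h2, h1, h3⟩
          rw [if_neg h2, if_neg h1, if_pos hw', if_pos h3]
          norm_num
        · have hw' : w ∉ T' := fun h => h3 (hT'T h)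
          rw [if_neg h2, if_neg h1, if_neg hw', if_neg h3]
          norm_num

/-- A finite simple graph has an odd factor (a set of edges in which every vertex
is incident to an odd number of edges) iff every connected component has an even
number of vertices. -/
theorem stmt0 {V : Type} [Fintype V] [DecidableEq V]
    (G : SimpleGraph V) [DecidableRel G.Adj] :
    (∃ F : Finset (Sym2 V), F ⊆ G.edgeFinset ∧
        ∀ v : V, Odd (F.filter (fun e => v ∈ e)).card) ↔
      ∀ c : G.ConnectedComponent, Even (Nat.card c.supp) := by
  constructor
  · rintro ⟨F, hFE, hodd⟩ c
    -- handshake parity within the component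
    have hsupp : Nat.card c.supp = (univ.filter (fun v => G.connectedComponentMk v = c)).card := by
      rw [Nat.card_eq_card_toFinset]
      congr 1
      ext v
      simp [SimpleGraph.ConnectedComponent.mem_supp_iff]
    rw [hsupp, even_iff_cast]
    push_cast
    have key : ∑ v ∈ univ.filter (fun v => G.connectedComponentMk v = c),
        (((F.filter (fun e => v ∈ e)).card : ZMod 2)) = 0 := by
      have swap : ∀ v : V, ((F.filter (fun e => v ∈ e)).card : ZMod 2)
          = ∑ e ∈ F, if v ∈ e then (1 : ZMod 2) else 0 := by
        intro v
        exact (Finset.sum_boole _ _).symm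
      simp_rw [swap]
      rw [Finset.sum_comm]
      apply Finset.sum_eq_zero
      intro e he
      have heE : e ∈ G.edgeSet := by
        rw [← SimpleGraph.mem_edgeFinset]; exact hFE he
      induction e with
      | h a b =>
        have hab : G.Adj a b := heE
        rw [← Finset.sum_filter]
        have hcc : G.connectedComponentMk a = G.connectedComponentMk b :=
          SimpleGraph.ConnectedComponent.connectedComponentMk_eq_of_adj hab
        by_cases hac : G.connectedComponentMk a = c
        · have : (univ.filter (fun v => G.connectedComponentMk v = c)).filter
              (fun v => v ∈ s(a,b)) = {a, b} := by
            ext w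
            simp only [Finset.mem_filter, Finset.mem_univ, true_and, Sym2.mem_iff,
              Finset.mem_insert, Finset.mem_singleton]
            constructor
            · rintro ⟨_, h⟩; exact h
            · rintro (rfl | rfl)
              · exact ⟨hac, Or.inl rfl⟩
              · exact ⟨hcc ▸ hac, Or.inr rfl⟩
          rw [this, Finset.sum_pair hab.ne]
          decide
        · have : (univ.filter (fun v => G.connectedComponentMk v = c)).filter
              (fun v => v ∈ s(a,b)) = ∅ := by
            ext w
            simp only [Finset.mem_filter, Finset.mem_univ, true_and, Sym2.mem_iff,
              Finset.notMem_empty, iff_false, not_and]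
            rintro hwc (rfl | rfl)
            · exact hac hwc
            · exact hac (hcc.trans hwc)
          rw [this]
          simp
    have hone : ∀ v ∈ univ.filter (fun v => G.connectedComponentMk v = c),
        ((F.filter (fun e => v ∈ e)).card : ZMod 2) = 1 :=
      fun v _ => (odd_iff_cast _).mp (hodd v)
    rw [Finset.sum_congr rfl hone] at key
    rw [Finset.sum_const, nsmul_eq_mul, mul_one] at key
    exact_mod_cast key
  · intro hev
    have hT : ∀ c : G.ConnectedComponent,
        Even (((univ : Finset V).filter (fun v => G.connectedComponentMk v = c)).card) := by
      intro c
      have := hev c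
      rwa [Nat.card_eq_card_toFinset, show c.supp.toFinset
          = (univ : Finset V).filter (fun v => G.connectedComponentMk v = c) from by
        ext v; simp [SimpleGraph.ConnectedComponent.mem_supp_iff]] at this
    obtain ⟨x, hx⟩ := tjoin G univ hT
    refine ⟨G.edgeFinset.filter (fun e => x e = 1), Finset.filter_subset _ _, fun v => ?_⟩
    rw [odd_iff_cast]
    have : (((G.edgeFinset.filter (fun e => x e = 1)).filter (fun e => v ∈ e)).card : ZMod 2)
        = bd G x v := by
      rw [← Finset.sum_boole, Finset.sum_filter, bd]
      apply Finset.sum_congr rfl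
      intro e _
      have hcases : ∀ a : ZMod 2, a = 0 ∨ a = 1 := by decide
      rcases hcases (x e) with h | h <;> simp [h]
    rw [this, hx]
    simp
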